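/- Let (X,d) be a connected Robinson space with |X| ≥ 2 and d(x,y) > 0 for all distinct x,y ∈ X, and let C be a connected component of the graph G_{<δ*}. Then either C is a union of maximal mmodules of (X,d), or there exists a maximal mmodule M of (X,d) with diam(M) = δ* such that C is a connected component of the graph G_{δ*} restricted to M. -/

import Mathlib

structure Dissim (X : Type*) where
  d : X → X → ℝ
  symm : ∀ x y, d x y = d y x
  nonneg : ∀ x y, 0 ≤ d x y
  self : ∀ x, d x x = 0

variable {X : Type*}

def Compatible (D : Dissim X) (lt : X → X → Prop) : Prop :=
  ∀ x y z : X, lt x y → lt y z → D.d x y ≤ D.d x z ∧ D.d y z ≤ D.d x z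

def IsCompatOrder (D : Dissim X) (lt : X → X → Prop) : Prop :=
  IsStrictTotalOrder X lt ∧ Compatible D lt

def Robinson (D : Dissim X) : Prop :=
  ∃ lt : X → X → Prop, IsCompatOrder D lt

def IsMmodule (D : Dissim X) (M : Set X) : Prop :=
  ∀ z ∉ M, ∀ x ∈ M, ∀ y ∈ M, D.d z x = D.d z y

def IsInterval (lt : X → X → Prop) (I : Set X) : Prop :=
  ∀ a b c : X, lt a b → lt b c → a ∈ I → c ∈ I → b ∈ I

def IsBlock (D : Dissim X) (Y : Set X) : Prop :=
  ∀ lt : X → X → Prop, IsCompatOrder D lt → IsInterval lt Y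

noncomputable def diam (D : Dissim X) (Y : Set X) : ℝ :=
  sSup (Set.image2 D.d Y Y)

def Gdelta (D : Dissim X) (δ : ℝ) : SimpleGraph X where
  Adj x y := x ≠ y ∧ D.d x y ≠ δ
  symm := by
    constructor
    rintro x y ⟨hxy, hd⟩
    exact ⟨hxy.symm, by rw [D.symm]; exact hd⟩
  loopless := by constructor; rintro x ⟨h, -⟩; exact h rfl

def Gle (D : Dissim X) (δ : ℝ) : SimpleGraph X where
  Adj x y := x ≠ y ∧ D.d x y ≤ δ
  symm := by
    constructor
    rintro x y ⟨hxy, hd⟩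
    exact ⟨hxy.symm, by rw [D.symm]; exact hd⟩
  loopless := by constructor; rintro x ⟨h, -⟩; exact h rfl

def Glt (D : Dissim X) (δ : ℝ) : SimpleGraph X where
  Adj x y := x ≠ y ∧ D.d x y < δ
  symm := by
    constructor
    rintro x y ⟨hxy, hd⟩
    exact ⟨hxy.symm, by rw [D.symm]; exact hd⟩
  loopless := by constructor; rintro x ⟨h, -⟩; exact h rfl

def IsCompOf {V : Type*} (G : SimpleGraph V) (C : Set V) : Prop :=
  ∃ x : V, C = {y | G.Reachable x y}

def MMax (D : Dissim X) : Set (Set X) :=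
  {M | IsMmodule D M ∧ M ≠ Set.univ ∧
    ∀ M' : Set X, IsMmodule D M' → M' ≠ Set.univ → M ⊆ M' → M = M'}

def IsPartition {α : Type*} (P : Set (Set α)) : Prop :=
  (∀ A ∈ P, A.Nonempty) ∧
  (∀ A ∈ P, ∀ B ∈ P, A ≠ B → Disjoint A B) ∧
  ⋃₀ P = Set.univ

def IsCopartition {α : Type*} (P : Set (Set α)) : Prop :=
  IsPartition ((fun M => Mᶜ) '' P)

def SimpleGraph.restrictTo {V : Type*} (G : SimpleGraph V) (S : Set V) : SimpleGraph V where
  Adj x y := x ∈ S ∧ y ∈ S ∧ G.Adj x y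
  symm := by constructor; rintro x y ⟨hx, hy, h⟩; exact ⟨hy, hx, h.symm⟩
  loopless := by constructor; rintro x ⟨-, -, h⟩; exact G.ne_of_adj h rfl

def ConnectedWithin {V : Type*} (G : SimpleGraph V) (S : Set V) : Prop :=
  S.Nonempty ∧ ∀ x ∈ S, ∀ y ∈ S, (G.restrictTo S).Reachable x y

def IsCompWithin {V : Type*} (G : SimpleGraph V) (S : Set V) (C : Set V) : Prop :=
  ∃ x ∈ S, C = {y | (G.restrictTo S).Reachable x y}

def IsStrictTotalOrderOn {α : Type*} (S : Set α) (lt : α → α → Prop) : Prop :=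
  (∀ x ∈ S, ¬ lt x x) ∧
  (∀ x ∈ S, ∀ y ∈ S, ∀ z ∈ S, lt x y → lt y z → lt x z) ∧
  (∀ x ∈ S, ∀ y ∈ S, x ≠ y → (lt x y ∨ lt y x) ∧ ¬ (lt x y ∧ lt y x))

def CompatibleOn (D : Dissim X) (S : Set X) (lt : X → X → Prop) : Prop :=
  ∀ x ∈ S, ∀ y ∈ S, ∀ z ∈ S, lt x y → lt y z → D.d x y ≤ D.d x z ∧ D.d y z ≤ D.d x z

def IsCompatOrderOn (D : Dissim X) (S : Set X) (lt : X → X → Prop) : Prop :=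
  IsStrictTotalOrderOn S lt ∧ CompatibleOn D S lt

def FlatOn (D : Dissim X) (S : Set X) : Prop :=
  ∃ lt : X → X → Prop, IsCompatOrderOn D S lt ∧ (∃ x ∈ S, ∃ y ∈ S, lt x y) ∧
    ∀ lt' : X → X → Prop, IsCompatOrderOn D S lt' →
      (∀ x ∈ S, ∀ y ∈ S, (lt' x y ↔ lt x y)) ∨ (∀ x ∈ S, ∀ y ∈ S, (lt' x y ↔ lt y x))

def Flat (D : Dissim X) : Prop :=
  ∃ lt : X → X → Prop, IsCompatOrder D lt ∧ (∃ x y : X, lt x y) ∧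
    ∀ lt' : X → X → Prop, IsCompatOrder D lt' →
      (∀ x y : X, lt' x y ↔ lt x y) ∨ (∀ x y : X, lt' x y ↔ lt y x)

def IsCopointAt (D : Dissim X) (p : X) (C : Set X) : Prop :=
  IsMmodule D C ∧ C.Nonempty ∧ p ∉ C ∧
  ∀ C' : Set X, IsMmodule D C' → p ∉ C' → C ⊆ C' → C = C'

def bigGraph (D : Dissim X) (δ : ℝ) (I : Set (Set X)) : SimpleGraph (Set X) where
  Adj C C' := C ∈ I ∧ C' ∈ I ∧ C ≠ C' ∧ ∃ x ∈ C, ∃ y ∈ C', δ < D.d x y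
  symm := by
    constructor
    rintro C C' ⟨hC, hC', hne, x, hx, y, hy, hd⟩
    exact ⟨hC', hC, hne.symm, y, hy, x, hx, by rw [D.symm]; exact hd⟩
  loopless := by constructor; rintro C ⟨-, -, hne, -⟩; exact hne rfl

/-!
If `C` swallows every maximal mmodule it meets, it is their union. Otherwise some maximal
mmodule `M` meets `C` and leaves it. Since `C` is at distance `≥ δ*` from everything outside it,
the mmodule property traps `C` inside `M`, and a `G_{≤δ*}`-edge leaving `M` produces a point
`z ∉ M` at distance exactly `δ*` from all of `M`. The order-convex hull of an mmodule in a
compatible order is again an mmodule, and it cannot be all of `X` without disconnecting some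
`G_δ`; so the maximal mmodule `M` is an interval of a compatible order. Then `z` lies on one
side of `M`, and the Robinson inequalities bound every distance inside `M` by `δ*`. Inside `M`
the graphs `G_{δ*}` and `G_{<δ*}` therefore coincide.
-/

namespace SimpleGraph

variable {V : Type*} {G : SimpleGraph V} {x y : V}

theorem Reachable.induction_adj {P : V → Prop} (h : G.Reachable x y) (hx : P x)
    (step : ∀ u v, G.Reachable x u → P u → G.Adj u v → P v) : P y := by
  rw [reachable_iff_reflTransGen] at h
  induction h with
  | refl => exact hx
  | tail hxu huv ih => exact step _ _ ((reachable_iff_reflTransGen _ _).2 hxu) ih huv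

theorem Preconnected.exists_adj_mem_notMem (hG : G.Preconnected) {S : Set V} (hx : x ∈ S)
    (hy : y ∉ S) : ∃ u ∈ S, ∃ v ∉ S, G.Adj u v := by
  obtain ⟨p⟩ := hG x y
  obtain ⟨d, -, hd, hd'⟩ := p.exists_boundary_dart S hx hy
  exact ⟨_, hd, _, hd', d.adj⟩

end SimpleGraph

open Set SimpleGraph

theorem IsCompOf.mem_iff_reachable {V : Type*} {G : SimpleGraph V} {C : Set V}
    (hC : IsCompOf G C) {x y : V} (hx : x ∈ C) : y ∈ C ↔ G.Reachable x y := by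
  obtain ⟨x₀, rfl⟩ := hC
  exact ⟨hx.symm.trans, hx.trans⟩

variable {D : Dissim X} {M C : Set X} {δ : ℝ}

theorem isMmodule_singleton (x : X) : IsMmodule D {x} := by
  intro z _ a ha b hb
  rw [mem_singleton_iff.1 ha, mem_singleton_iff.1 hb]

theorem exists_mem_MMax [Finite X] [Nontrivial X] (x : X) : ∃ M ∈ MMax D, x ∈ M := by
  obtain ⟨M, ⟨hM, hMne, hxM⟩, hmax⟩ :=
    Set.Finite.exists_maximalFor id {A | IsMmodule D A ∧ A ≠ univ ∧ x ∈ A} (toFinite _)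
      ⟨{x}, isMmodule_singleton x, singleton_ne_univ x, rfl⟩
  exact ⟨M, ⟨hM, hMne, fun M' hM' hM'ne hsub => hsub.antisymm (hmax ⟨hM', hM'ne, hsub hxM⟩ hsub)⟩,
    hxM⟩

theorem eq_sUnion_MMax_of_forall_subset [Finite X] [Nontrivial X]
    (h : ∀ A ∈ MMax D, (A ∩ C).Nonempty → A ⊆ C) :
    C = ⋃₀ {A | A ∈ MMax D ∧ (A ∩ C).Nonempty} := by
  ext w
  constructor
  · intro hw
    obtain ⟨A, hA, hwA⟩ := exists_mem_MMax (D := D) w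
    exact ⟨A, ⟨hA, w, hwA, hw⟩, hwA⟩
  · rintro ⟨A, ⟨hA, hAC⟩, hwA⟩
    exact h A hA hAC hwA

theorem IsCompOf.le_d_of_mem_of_notMem (hC : IsCompOf (Glt D δ) C) {c y : X} (hc : c ∈ C)
    (hy : y ∉ C) : δ ≤ D.d c y := by
  by_contra! h
  exact hy ((hC.mem_iff_reachable hc).2 (Adj.reachable ⟨fun hcy => hy (hcy ▸ hc), h⟩))

theorem IsMmodule.subset_of_isCompOf_Glt (hM : IsMmodule D M) (hC : IsCompOf (Glt D δ) C)
    (hMC : (M ∩ C).Nonempty) (hMC' : ¬ M ⊆ C) : C ⊆ M := by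
  obtain ⟨xc, hxcM, hxcC⟩ := hMC
  obtain ⟨p, hpM, hpC⟩ := not_subset.1 hMC'
  intro y hy
  refine ((hC.mem_iff_reachable hxcC).1 hy).induction_adj hxcM fun u v hu huM huv => ?_
  by_contra hvM
  have hvC : v ∈ C := (hC.mem_iff_reachable hxcC).2 (hu.trans huv.reachable)
  have hvp := hC.le_d_of_mem_of_notMem hvC hpC
  rw [← hM v hvM u huM p hpM, D.symm] at hvp
  exact huv.2.not_ge hvp

theorem IsMmodule.exists_forall_d_eq_of_isCompOf_Glt (hM : IsMmodule D M) (hMne : M ≠ univ)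
    (hC : IsCompOf (Glt D δ) C) (hCM : C ⊆ M) {x : X} (hx : x ∈ C) (hδ : (Gle D δ).Connected) :
    ∃ z ∉ M, ∀ m ∈ M, D.d z m = δ := by
  obtain ⟨q, hq⟩ := (ne_univ_iff_exists_notMem M).1 hMne
  obtain ⟨u, huM, z, hzM, huz⟩ := hδ.preconnected.exists_adj_mem_notMem (hCM hx) hq
  have hzu : D.d z u = δ := by
    refine le_antisymm (D.symm z u ▸ huz.2) ?_
    rw [hM z hzM u huM x (hCM hx), D.symm]
    exact hC.le_d_of_mem_of_notMem hx fun hz => hzM (hCM hz)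
  exact ⟨z, hzM, fun m hm => (hM z hzM m hm u huM).trans hzu⟩

theorem eq_empty_of_forall_d_eq {α : ℝ} (hM : M ≠ univ) (hα : (Gdelta D α).Preconnected)
    (h : ∀ a ∉ M, ∀ m ∈ M, D.d a m = α) : M = ∅ := by
  by_contra! hne
  obtain ⟨m, hm⟩ := hne
  obtain ⟨q, hq⟩ := (ne_univ_iff_exists_notMem M).1 hM
  obtain ⟨u, hu, v, hv, huv⟩ := hα.exists_adj_mem_notMem hm hq
  exact huv.2 (D.symm u v ▸ h v hv u hu)

theorem diam_eq_of_forall_le {α : ℝ} (hle : ∀ u ∈ M, ∀ v ∈ M, D.d u v ≤ α) {a b : X}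
    (ha : a ∈ M) (hb : b ∈ M) (hab : D.d a b = α) : diam D M = α :=
  IsGreatest.csSup_eq ⟨⟨a, ha, b, hb, hab⟩, by rintro _ ⟨u, hu, v, hv, rfl⟩; exact hle u hu v hv⟩

theorem IsCompOf.isCompWithin_Gdelta (hC : IsCompOf (Glt D δ) C) (hCM : C ⊆ M)
    (hle : ∀ u ∈ M, ∀ v ∈ M, D.d u v ≤ δ) : IsCompWithin (Gdelta D δ) M C := by
  obtain ⟨x, rfl⟩ := hC
  refine ⟨x, hCM (Reachable.refl x), ext fun y => ⟨fun hy => ?_, fun hy => ?_⟩⟩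
  · refine hy.induction_adj (Reachable.refl x) fun u v hu hxu huv => hxu.trans ?_
    exact Adj.reachable ⟨hCM hu, hCM (hu.trans huv.reachable), huv.1, huv.2.ne⟩
  · refine hy.mono (show (Gdelta D δ).restrictTo M ≤ Glt D δ from fun u v huv => ?_)
    obtain ⟨hu, hv, hne, hd⟩ := huv
    exact ⟨hne, (hle u hu v hv).lt_of_ne hd⟩

section Order

variable {lt : X → X → Prop}

def intervalHull (lt : X → X → Prop) (M : Set X) : Set X :=
  M ∪ {w | ∃ u ∈ M, ∃ v ∈ M, lt u w ∧ lt w v}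

theorem isInterval_of_intervalHull_subset (h : intervalHull lt M ⊆ M) : IsInterval lt M :=
  fun a _ c hab hbc ha hc => h (Or.inr ⟨a, ha, c, hc, hab, hbc⟩)

variable [Std.Trichotomous lt]

theorem forall_lt_or_forall_gt_of_notMem_intervalHull {z : X}
    (hz : z ∉ intervalHull lt M) : (∀ m ∈ M, lt z m) ∨ (∀ m ∈ M, lt m z) := by
  by_contra! h
  obtain ⟨⟨m, hm, hnzm⟩, ⟨m', hm', hnm'z⟩⟩ := h
  have hzM : z ∉ M := fun h => hz (Or.inl h)
  rcases trichotomous_of lt z m with hzm | rfl | hmz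
  · exact hnzm hzm
  · exact hzM hm
  rcases trichotomous_of lt z m' with hzm' | rfl | hm'z
  · exact hz (Or.inr ⟨m, hm, m', hm', hmz, hzm'⟩)
  · exact hzM hm'
  · exact hnm'z hm'z

theorem IsMmodule.isMmodule_intervalHull [IsTrans X lt] (hM : IsMmodule D M)
    (hcomp : Compatible D lt) :
    IsMmodule D (intervalHull lt M) := by
  intro z hz
  have hzM : z ∉ M := fun h => hz (Or.inl h)
  -- a point between `u, v ∈ M` sees `z` at a distance squeezed between the equal `d z u, d z v`
  have hval : ∀ x ∈ intervalHull lt M, ∃ m ∈ M, D.d z x = D.d z m := by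
    rintro x (hxM | ⟨u, hu, v, hv, hux, hxv⟩)
    · exact ⟨x, hxM, rfl⟩
    refine ⟨u, hu, ?_⟩
    have hvu := hM z hzM v hv u hu
    rcases forall_lt_or_forall_gt_of_notMem_intervalHull hz with hleft | hright
    · have hzu := hleft u hu
      exact le_antisymm (hvu ▸ (hcomp z x v (trans_of lt hzu hux) hxv).1)
        (hcomp z u x hzu hux).1
    · have hvz := hright v hv
      rw [D.symm z x, D.symm z u]
      refine le_antisymm (hcomp u x z hux (trans_of lt hxv hvz)).2 ?_
      rw [← D.symm z u, ← hvu, D.symm]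
      exact (hcomp x v z hxv hvz).2
  intro x hx y hy
  obtain ⟨m, hm, hxm⟩ := hval x hx
  obtain ⟨m', hm', hym'⟩ := hval y hy
  rw [hxm, hym', hM z hzM m hm m' hm']

theorem IsMmodule.d_eq_of_intervalHull_eq_univ (hM : IsMmodule D M) (hcomp : Compatible D lt)
    (hH : intervalHull lt M = univ) {a b : X} (ha : a ∉ M) (hb : b ∉ M) {m : X} (hm : m ∈ M) :
    D.d a m = D.d b m := by
  have hbet : ∀ w ∉ M, ∃ u ∈ M, ∃ v ∈ M, lt u w ∧ lt w v := fun w hw =>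
    (hH ▸ mem_univ w : w ∈ intervalHull lt M).resolve_left hw
  wlog hab : lt a b generalizing a b
  · rcases trichotomous_of lt a b with h | rfl | h
    · exact absurd h hab
    · rfl
    · exact (this hb ha h).symm
  obtain ⟨u, hu, -, -, hua, -⟩ := hbet a ha
  obtain ⟨-, -, v, hv, -, hbv⟩ := hbet b hb
  refine le_antisymm ?_ ?_
  · rw [hM a ha m hm u hu, hM b hb m hm u hu, D.symm a, D.symm b]
    exact (hcomp u a b hua hab).1
  · rw [hM a ha m hm v hv, hM b hb m hm v hv]
    exact (hcomp a b v hab hbv).2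

theorem IsInterval.d_le_of_forall_d_eq (hI : IsInterval lt M) (hcomp : Compatible D lt) {z : X}
    (hz : z ∉ M) {α : ℝ} (h : ∀ m ∈ M, D.d z m = α) {u v : X} (hu : u ∈ M) (hv : v ∈ M) :
    D.d u v ≤ α := by
  wlog huv : lt u v generalizing u v
  · rcases trichotomous_of lt u v with h' | rfl | h'
    · exact absurd h' huv
    · rw [D.self, ← h u hu]
      exact D.nonneg z u
    · exact D.symm u v ▸ this hv hu h'
  rcases trichotomous_of lt z u with hzu | rfl | huz
  · exact h v hv ▸ (hcomp z u v hzu huv).2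
  · exact absurd hu hz
  rcases trichotomous_of lt z v with hzv | rfl | hvz
  · exact absurd (hI u z v huz hzv hu hv) hz
  · exact absurd hv hz
  · exact (D.symm z u ▸ h u hu) ▸ (hcomp u v z huv hvz).1

end Order

theorem isBlock_of_mem_MMax (hpos : ∀ x y : X, x ≠ y → 0 < D.d x y)
    (hconn : ∀ δ : ℝ, 0 < δ → (Gdelta D δ).Connected) (hM : M ∈ MMax D) : IsBlock D M := by
  rintro lt ⟨_, hcomp⟩
  apply isInterval_of_intervalHull_subset
  by_cases hH : intervalHull lt M = univ
  · -- then `X ∖ M` is at a single distance `α` from `M`, and no edge of `G_α` leaves `M`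
    rcases M.eq_empty_or_nonempty with rfl | ⟨m, hm⟩
    · simp [intervalHull]
    obtain ⟨z, hz⟩ := (ne_univ_iff_exists_notMem M).1 hM.2.1
    have hα := (hconn _ (hpos z m fun h => hz (h ▸ hm))).preconnected
    have hMe := eq_empty_of_forall_d_eq hM.2.1 hα fun a ha m' hm' =>
      (hM.1 a ha m' hm' m hm).trans (hM.1.d_eq_of_intervalHull_eq_univ hcomp hH ha hz hm)
    exact absurd (hMe ▸ hm) (notMem_empty m)
  · exact (hM.2.2 _ (hM.1.isMmodule_intervalHull hcomp) hH subset_union_left).symm.subset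

theorem stmt14_general [Fintype X] (D : Dissim X)
    (hcard : 2 ≤ Fintype.card X)
    (hpos : ∀ x y : X, x ≠ y → 0 < D.d x y)
    (hRob : Robinson D)
    (hconn : ∀ δ : ℝ, 0 < δ → (Gdelta D δ).Connected)
    (δstar : ℝ)
    (hls : IsLeast {δ : ℝ | 0 < δ ∧ (Gle D δ).Connected} δstar)
    (C : Set X) (hC : IsCompOf (Glt D δstar) C) :
    (∃ M : Set (Set X), (∀ A ∈ M, A ∈ MMax D) ∧ C = ⋃₀ M) ∨
    (∃ M ∈ MMax D, diam D M = δstar ∧ IsCompWithin (Gdelta D δstar) M C) := by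
  have : Nontrivial X := Fintype.one_lt_card_iff_nontrivial.1 hcard
  by_cases hcase : ∀ A ∈ MMax D, (A ∩ C).Nonempty → A ⊆ C
  · exact Or.inl ⟨_, fun A hA => hA.1, eq_sUnion_MMax_of_forall_subset hcase⟩
  push Not at hcase
  obtain ⟨M, hM, hMC, hMnsub⟩ := hcase
  have hCM : C ⊆ M := hM.1.subset_of_isCompOf_Glt hC hMC hMnsub
  obtain ⟨x, -, hxC⟩ := hMC
  obtain ⟨p, hpM, hpC⟩ := not_subset.1 hMnsub
  obtain ⟨z, hzM, hz⟩ := hM.1.exists_forall_d_eq_of_isCompOf_Glt hM.2.1 hC hCM hxC hls.1.2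
  obtain ⟨lt, hlt⟩ := hRob
  have : IsStrictTotalOrder X lt := hlt.1
  have hle : ∀ u ∈ M, ∀ v ∈ M, D.d u v ≤ δstar := fun u hu v hv =>
    (isBlock_of_mem_MMax hpos hconn hM lt hlt).d_le_of_forall_d_eq hlt.2 hzM hz hu hv
  have hxp : D.d x p = δstar :=
    le_antisymm (hle x (hCM hxC) p hpM) (hC.le_d_of_mem_of_notMem hxC hpC)
  exact Or.inr ⟨M, hM, diam_eq_of_forall_le hle (hCM hxC) hpM hxp, hC.isCompWithin_Gdelta hCM hle⟩

/-- in a connected Robinson space, every connected component C of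
G_{<δ*} is either a union of maximal mmodules, or a connected component of
G_{δ*} restricted to some maximal mmodule M with diam(M) = δ*. -/
theorem stmt14 [Fintype X] [Nonempty X] (D : Dissim X)
    (hcard : 2 ≤ Fintype.card X)
    (hpos : ∀ x y : X, x ≠ y → 0 < D.d x y)
    (hRob : Robinson D)
    (hconn : ∀ δ : ℝ, 0 < δ → (Gdelta D δ).Connected)
    (δstar : ℝ)
    (hls : IsLeast {δ : ℝ | 0 < δ ∧ (Gle D δ).Connected} δstar)
    (C : Set X) (hC : IsCompOf (Glt D δstar) C) :
    (∃ M : Set (Set X), (∀ A ∈ M, A ∈ MMax D) ∧ C = ⋃₀ M) ∨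
    (∃ M ∈ MMax D, diam D M = δstar ∧ IsCompWithin (Gdelta D δstar) M C) :=
  stmt14_general D hcard hpos hRob hconn δstar hls C hC
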